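/- arXiv:2305.08833 — 2 statements merged into one kernel-verified Lean document; each statement's English description precedes it below -/
import Mathlib

section
/- Let u : [T₀, T] → ℝ be continuous and λ̇ ∈ L²([T₀, T]) with ∫_{T₀}^{T} λ̇_t² dt < ε. Suppose u_t² ≤ u_{T₀}² + 4(t - T₀) + 2∫_{T₀}^{t} |λ̇_s u_s| ds for all t ∈ [T₀, T]. Then (sup_{t∈[T₀,T]} u_t²)^{1/2} ≤ (u_{T₀}² + (4+ε)(T - T₀))^{1/2} + (ε (T - T₀))^{1/2}. -/
open MeasureTheory

/-- Grönwall-type self-bounding estimate: if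
`u_t² ≤ u_{T₀}² + 4(t-T₀) + 2∫_{T₀}^t |λ̇ u|` on `[T₀,T]` and `∫_{T₀}^T λ̇² < ε`, then
`(sup u²)^{1/2} ≤ (u_{T₀}² + (4+ε)(T-T₀))^{1/2} + (ε(T-T₀))^{1/2}`. -/
theorem stmt_12 (u lamd : ℝ → ℝ) (T₀ T ε : ℝ) (hT : T₀ ≤ T) (hε : 0 < ε)
    (hu : ContinuousOn u (Set.Icc T₀ T))
    (hld : IntervalIntegrable (fun t => lamd t ^ 2) volume T₀ T)
    (hldε : (∫ t in T₀..T, lamd t ^ 2) < ε)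
    (hint : ∀ t ∈ Set.Icc T₀ T,
      IntervalIntegrable (fun s => |lamd s * u s|) volume T₀ t)
    (hbound : ∀ t ∈ Set.Icc T₀ T,
      u t ^ 2 ≤ u T₀ ^ 2 + 4 * (t - T₀) + 2 * ∫ s in T₀..t, |lamd s * u s|) :
    Real.sqrt (⨆ t : Set.Icc T₀ T, u ↑t ^ 2) ≤
      Real.sqrt (u T₀ ^ 2 + (4 + ε) * (T - T₀)) + Real.sqrt (ε * (T - T₀)) := by
  have hne : (Set.Icc T₀ T).Nonempty := ⟨T₀, le_refl _, hT⟩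
  haveI : Nonempty (Set.Icc T₀ T) := hne.to_subtype
  set D : ℝ := T - T₀ with hDdef
  have hD : 0 ≤ D := by simp [hDdef]; linarith
  set M : ℝ := ⨆ t : Set.Icc T₀ T, u ↑t ^ 2 with hMdef
  have hbdd : BddAbove (Set.range fun t : Set.Icc T₀ T => u ↑t ^ 2) := by
    have h1 : (Set.range fun t : Set.Icc T₀ T => u ↑t ^ 2)
        = (fun t => u t ^ 2) '' Set.Icc T₀ T :=
      (Set.image_eq_range (fun t => u t ^ 2) (Set.Icc T₀ T)).symm
    rw [h1]
    exact (isCompact_Icc.image_of_continuousOn (hu.pow 2)).bddAbove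
  have hMb : ∀ t ∈ Set.Icc T₀ T, u t ^ 2 ≤ M := fun t ht =>
    le_ciSup hbdd (⟨t, ht⟩ : Set.Icc T₀ T)
  have hM0 : 0 ≤ M := le_trans (sq_nonneg _) (hMb T₀ ⟨le_refl _, hT⟩)
  -- key estimate
  have key : ∀ c : ℝ, 0 < c → M ≤ u T₀ ^ 2 + 4 * D + (c * ε + D * M / c) := by
    intro c hc
    apply ciSup_le
    rintro ⟨t, ht⟩
    have ht1 : T₀ ≤ t := ht.1
    have ht2 : t ≤ T := ht.2
    have hsub : Set.uIcc T₀ t ⊆ Set.uIcc T₀ T := by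
      rw [Set.uIcc_of_le ht1, Set.uIcc_of_le hT]
      exact Set.Icc_subset_Icc le_rfl ht2
    have hld' : IntervalIntegrable (fun s => lamd s ^ 2) volume T₀ t :=
      hld.mono_set hsub
    have hu2 : IntervalIntegrable (fun s => u s ^ 2) volume T₀ t := by
      apply ContinuousOn.intervalIntegrable
      rw [Set.uIcc_of_le ht1]
      exact (hu.pow 2).mono (Set.Icc_subset_Icc le_rfl ht2)
    have hrhsint : IntervalIntegrable
        (fun s => c / 2 * lamd s ^ 2 + u s ^ 2 / (2 * c)) volume T₀ t :=
      (hld'.const_mul _).add (hu2.div_const _)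
    have hpt : ∀ s ∈ Set.Icc T₀ t,
        |lamd s * u s| ≤ c / 2 * lamd s ^ 2 + u s ^ 2 / (2 * c) := by
      intro s _
      rw [abs_mul]
      have h1 := sq_nonneg (c * |lamd s| - |u s|)
      have h2 : |lamd s| ^ 2 = lamd s ^ 2 := sq_abs _
      have h3 : |u s| ^ 2 = u s ^ 2 := sq_abs _
      have k2 : 2 * c * (|lamd s| * |u s|) ≤ c ^ 2 * lamd s ^ 2 + u s ^ 2 := by
        nlinarith [h1, h2, h3]
      have k3 : |lamd s| * |u s| ≤ (c ^ 2 * lamd s ^ 2 + u s ^ 2) / (2 * c) := by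
        rw [le_div_iff₀ (by positivity)]; linarith
      have k4 : (c ^ 2 * lamd s ^ 2 + u s ^ 2) / (2 * c)
          = c / 2 * lamd s ^ 2 + u s ^ 2 / (2 * c) := by
        field_simp
      linarith [k3, k4.le, k4.ge]
    have hint1 : (∫ s in T₀..t, |lamd s * u s|)
        ≤ ∫ s in T₀..t, (c / 2 * lamd s ^ 2 + u s ^ 2 / (2 * c)) :=
      intervalIntegral.integral_mono_on ht1 (hint t ht) hrhsint hpt
    have hsplit : (∫ s in T₀..t, (c / 2 * lamd s ^ 2 + u s ^ 2 / (2 * c)))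
        = c / 2 * (∫ s in T₀..t, lamd s ^ 2) + (∫ s in T₀..t, u s ^ 2) / (2 * c) := by
      rw [intervalIntegral.integral_add (hld'.const_mul _) (hu2.div_const _),
        intervalIntegral.integral_const_mul, intervalIntegral.integral_div]
    have hl2 : (∫ s in T₀..t, lamd s ^ 2) ≤ ε := by
      have : (∫ s in T₀..t, lamd s ^ 2) ≤ ∫ s in T₀..T, lamd s ^ 2 := by
        apply intervalIntegral.integral_mono_interval le_rfl ht1 ht2
        · filter_upwards with s using sq_nonneg _
        · exact hld
      linarith
    have hu2M : (∫ s in T₀..t, u s ^ 2) ≤ (t - T₀) * M := by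
      have : (∫ s in T₀..t, u s ^ 2) ≤ ∫ _ in T₀..t, M := by
        apply intervalIntegral.integral_mono_on ht1 hu2 intervalIntegrable_const
        intro s hs
        exact hMb s ⟨hs.1, le_trans hs.2 ht2⟩
      simpa using this
    have hbt := hbound t ht
    have htD : t - T₀ ≤ D := by simp [hDdef]; linarith
    have h4 : (∫ s in T₀..t, |lamd s * u s|) ≤ c / 2 * ε + (t - T₀) * M / (2 * c) := by
      calc (∫ s in T₀..t, |lamd s * u s|)
          ≤ c / 2 * (∫ s in T₀..t, lamd s ^ 2) + (∫ s in T₀..t, u s ^ 2) / (2 * c) := by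
            rw [← hsplit]; exact hint1
        _ ≤ c / 2 * ε + (t - T₀) * M / (2 * c) := by
            gcongr
    have h5 : (t - T₀) * M / (2 * c) ≤ D * M / (2 * c) := by
      apply div_le_div_of_nonneg_right (mul_le_mul_of_nonneg_right htD hM0) (by positivity)
    have : u t ^ 2 ≤ u T₀ ^ 2 + 4 * (t - T₀) + 2 * (c / 2 * ε + D * M / (2 * c)) := by
      linarith
    have h6 : 2 * (c / 2 * ε + D * M / (2 * c)) = c * ε + D * M / c := by
      field_simp
    rw [h6] at this
    linarith
  -- now case analysis
  rcases eq_or_lt_of_le hM0 with hMz | hMpos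
  · rw [← hMz, Real.sqrt_zero]
    positivity
  rcases eq_or_lt_of_le hD with hDz | hDpos
  · -- T = T₀ : every t in Icc equals T₀
    have hTT : T = T₀ := by simp [hDdef] at hDz ⊢; linarith
    have hMle : M ≤ u T₀ ^ 2 := by
      apply ciSup_le
      rintro ⟨t, ht1, ht2⟩
      have htt : t = T₀ := le_antisymm (hTT ▸ ht2) ht1
      show u t ^ 2 ≤ u T₀ ^ 2
      rw [htt]
    have : Real.sqrt M ≤ Real.sqrt (u T₀ ^ 2 + (4 + ε) * (T - T₀)) := by
      apply Real.sqrt_le_sqrt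
      have : (4 + ε) * (T - T₀) = 0 := by rw [hTT]; ring
      linarith
    have h0 : 0 ≤ Real.sqrt (ε * (T - T₀)) := Real.sqrt_nonneg _
    linarith
  · -- main case
    set s := Real.sqrt (ε * D * M) with hsdef
    have hs2 : s ^ 2 = ε * D * M := Real.sq_sqrt (by positivity)
    have hspos : 0 < s := Real.sqrt_pos.mpr (by positivity)
    have hc : M ≤ u T₀ ^ 2 + 4 * D + 2 * s := by
      have := key (s / ε) (by positivity)
      have e1 : s / ε * ε = s := by field_simp
      have e2 : D * M / (s / ε) = s := by
        rw [div_div_eq_mul_div]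
        rw [eq_comm, eq_div_iff hspos.ne']
        nlinarith [hs2]
      rw [e1, e2] at this
      linarith
    -- complete the square
    set x := Real.sqrt M with hxdef
    set b := Real.sqrt (ε * D) with hbdef
    have hx2 : x ^ 2 = M := Real.sq_sqrt hM0
    have hb2 : b ^ 2 = ε * D := Real.sq_sqrt (by positivity)
    have hsxb : s = b * x := by
      rw [hsdef, hbdef, hxdef, ← Real.sqrt_mul (by positivity)]
    have hsq : (x - b) ^ 2 ≤ u T₀ ^ 2 + 4 * D + ε * D := by
      have : x ^ 2 - 2 * b * x + b ^ 2 ≤ u T₀ ^ 2 + 4 * D + b ^ 2 := by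
        rw [hx2, hb2]
        nlinarith [hc, hsxb]
      nlinarith [this]
    have habs : |x - b| ≤ Real.sqrt (u T₀ ^ 2 + 4 * D + ε * D) := by
      rw [← Real.sqrt_sq_eq_abs]
      exact Real.sqrt_le_sqrt hsq
    have hxle : x ≤ b + Real.sqrt (u T₀ ^ 2 + 4 * D + ε * D) :=
      by linarith [abs_le.mp habs |>.2, le_abs_self (x - b)]
    have heq : u T₀ ^ 2 + 4 * D + ε * D = u T₀ ^ 2 + (4 + ε) * (T - T₀) := by
      rw [hDdef]; ring
    have heq2 : b = Real.sqrt (ε * (T - T₀)) := by rw [hbdef, hDdef]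
    rw [heq, heq2] at hxle
    linarith
end

section
/- Suppose f_t(z) is differentiable in t with spatial derivative f_t'(z) never zero, and ∂_t f_t'(z) = -2 f_t'(z)/f_t(z)². Then ∂_t log|f_t'(z)| = -Re(2/f_t(z)²). Consequently, if f_t(z)²/(4t) → 1 as t → ±∞, then |f_t'(z)| = |t|^{-1/2 + o(1)} as t → ±∞. -/
open Filter Topology


lemma logNormDeriv (w : ℝ → ℂ) (w' : ℂ) (t : ℝ) (hwt : w t ≠ 0) (h : HasDerivAt w w' t) :
    HasDerivAt (fun s => Real.log ‖w s‖) ((w' / w t).re) t := by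
  have hu : HasDerivAt (fun s => (w s).re) w'.re t :=
    Complex.reCLM.hasFDerivAt.comp_hasDerivAt t h
  have hv : HasDerivAt (fun s => (w s).im) w'.im t :=
    Complex.imCLM.hasFDerivAt.comp_hasDerivAt t h
  have hsq : HasDerivAt (fun s => (w s).re ^ 2 + (w s).im ^ 2)
      (2 * (w t).re * w'.re + 2 * (w t).im * w'.im) t := by
    have := (hu.pow 2).add (hv.pow 2)
    convert this using 1
    · rfl
    · rfl
    · rfl
    ring
  have hpos : 0 < (w t).re ^ 2 + (w t).im ^ 2 := by
    have := Complex.normSq_pos.mpr hwt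
    rw [Complex.normSq_apply] at this
    nlinarith
  have hne : (w t).re ^ 2 + (w t).im ^ 2 ≠ 0 := ne_of_gt hpos
  have hlog := ((Real.hasDerivAt_log hne).comp t hsq).div_const 2
  have heq : (fun s => Real.log ‖w s‖) =
      (fun s => Real.log ((w s).re ^ 2 + (w s).im ^ 2) / 2) := by
    funext s
    have h1 : (w s).re ^ 2 + (w s).im ^ 2 = ‖w s‖ ^ 2 := by
      rw [Complex.sq_norm, Complex.normSq_apply]; ring
    rw [h1, Real.log_pow]
    push_cast; ring
  rw [heq]
  convert hlog using 1
  · rfl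
  · rfl
  · rfl
  have e : (w t).re * (w t).re + (w t).im * (w t).im = (w t).re ^ 2 + (w t).im ^ 2 := by ring
  rw [Complex.div_re, Complex.normSq_apply, e]
  field_simp

lemma core (g d : ℝ → ℝ) (L : ℝ) (hg : ∀ t, HasDerivAt g (d t) t)
    (hd : Tendsto (fun t => t * d t) atTop (𝓝 L)) :
    Tendsto (fun t => g t / Real.log t) atTop (𝓝 L) := by
  rw [Metric.tendsto_nhds]
  intro ε hε
  have hε3 : 0 < ε / 3 := by linarith
  have hev : ∀ᶠ t in atTop, |t * d t - L| < ε / 3 := by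
    have := Metric.tendsto_nhds.mp hd (ε / 3) hε3
    simpa [Real.dist_eq] using this
  obtain ⟨T₀, hT₀⟩ := eventually_atTop.mp hev
  set T : ℝ := max T₀ 2 with hTdef
  have hT2 : (2 : ℝ) ≤ T := le_max_right _ _
  have hTpos : (0 : ℝ) < T := by linarith
  have hbound : ∀ t, T ≤ t → (L - ε / 3) / t ≤ d t ∧ d t ≤ (L + ε / 3) / t := by
    intro t ht
    have htpos : 0 < t := lt_of_lt_of_le hTpos ht
    have h1 := hT₀ t (le_trans (le_max_left _ _) ht)
    have h2 := abs_lt.mp h1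
    constructor
    · rw [div_le_iff₀ htpos]
      nlinarith [h2.1]
    · rw [le_div_iff₀ htpos]
      nlinarith [h2.2]
  -- upper bound: g t ≤ g T + (L + ε/3) * (log t - log T)
  have key : ∀ (c : ℝ), (∀ t, T ≤ t → d t ≤ c / t) →
      ∀ t, T ≤ t → g t - c * Real.log t ≤ g T - c * Real.log T := by
    intro c hc t ht
    have mono : AntitoneOn (fun s => g s - c * Real.log s) (Set.Ici T) := by
      have hderiv : ∀ s ∈ Set.Ici T, HasDerivAt (fun s => g s - c * Real.log s)
          (d s - c / s) s := by
        intro s hs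
        have hspos : 0 < s := lt_of_lt_of_le hTpos hs
        exact (hg s).sub (((Real.hasDerivAt_log (ne_of_gt hspos)).const_mul c).congr_deriv
          (by field_simp))
      apply antitoneOn_of_deriv_nonpos (convex_Ici T)
      · exact fun s hs => ((hderiv s hs).continuousAt).continuousWithinAt
      · intro s hs
        rw [interior_Ici] at hs
        exact (hderiv s (Set.mem_Ici.mpr (le_of_lt hs))).differentiableAt.differentiableWithinAt
      · intro s hs
        rw [interior_Ici] at hs
        rw [(hderiv s (Set.mem_Ici.mpr (le_of_lt hs))).deriv]
        have := hc s (le_of_lt hs)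
        linarith
    exact mono (Set.self_mem_Ici) (Set.mem_Ici.mpr ht) ht
  have key' : ∀ (c : ℝ), (∀ t, T ≤ t → c / t ≤ d t) →
      ∀ t, T ≤ t → g T - c * Real.log T ≤ g t - c * Real.log t := by
    intro c hc t ht
    have mono : MonotoneOn (fun s => g s - c * Real.log s) (Set.Ici T) := by
      have hderiv : ∀ s ∈ Set.Ici T, HasDerivAt (fun s => g s - c * Real.log s)
          (d s - c / s) s := by
        intro s hs
        have hspos : 0 < s := lt_of_lt_of_le hTpos hs
        exact (hg s).sub (((Real.hasDerivAt_log (ne_of_gt hspos)).const_mul c).congr_deriv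
          (by field_simp))
      apply monotoneOn_of_deriv_nonneg (convex_Ici T)
      · exact fun s hs => ((hderiv s hs).continuousAt).continuousWithinAt
      · intro s hs
        rw [interior_Ici] at hs
        exact (hderiv s (Set.mem_Ici.mpr (le_of_lt hs))).differentiableAt.differentiableWithinAt
      · intro s hs
        rw [interior_Ici] at hs
        rw [(hderiv s (Set.mem_Ici.mpr (le_of_lt hs))).deriv]
        have := hc s (le_of_lt hs)
        linarith
    exact mono (Set.self_mem_Ici) (Set.mem_Ici.mpr ht) ht
  have hup := key (L + ε / 3) (fun t ht => (hbound t ht).2)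
  have hlo := key' (L - ε / 3) (fun t ht => (hbound t ht).1)
  obtain ⟨A, hA_def⟩ : ∃ x : ℝ, x = g T - (L + ε / 3) * Real.log T := ⟨_, rfl⟩
  obtain ⟨B, hB_def⟩ : ∃ x : ℝ, x = g T - (L - ε / 3) * Real.log T := ⟨_, rfl⟩
  have hM : ∀ᶠ t in atTop, Real.log t ≥ 3 * (|A| + |B| + 1) / ε :=
    Real.tendsto_log_atTop.eventually_ge_atTop _
  filter_upwards [hM, eventually_ge_atTop T] with t hMt hTt
  have hlogpos : 0 < Real.log t := by
    have : 0 < 3 * (|A| + |B| + 1) / ε := by positivity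
    linarith
  have hA : |A| ≤ ε / 3 * Real.log t := by
    rw [ge_iff_le, div_le_iff₀ hε] at hMt
    nlinarith [abs_nonneg A, abs_nonneg B]
  have hB : |B| ≤ ε / 3 * Real.log t := by
    rw [ge_iff_le, div_le_iff₀ hε] at hMt
    nlinarith [abs_nonneg A, abs_nonneg B]
  have h1 : g t ≤ A + (L + ε / 3) * Real.log t := by
    have := hup t hTt; rw [hA_def]; linarith
  have h2 : B + (L - ε / 3) * Real.log t ≤ g t := by
    have := hlo t hTt; rw [hB_def]; linarith
  rw [Real.dist_eq, abs_lt]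
  have hlt1 : (L - ε) * Real.log t < g t := by
    nlinarith [neg_abs_le B, mul_pos hε hlogpos]
  have hlt2 : g t < (L + ε) * Real.log t := by
    nlinarith [le_abs_self A, mul_pos hε hlogpos]
  constructor
  · have := (lt_div_iff₀ hlogpos).mpr hlt1; linarith
  · have := (div_lt_iff₀ hlogpos).mpr hlt2; linarith

lemma limAux (F : ℝ → ℂ) (hF : ∀ t, F t ≠ 0) (l : Filter ℝ) (hne : ∀ᶠ t : ℝ in l, t ≠ 0)
    (hc : Tendsto (fun t : ℝ => F t ^ 2 / (4 * (t : ℂ))) l (𝓝 1)) :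
    Tendsto (fun t : ℝ => t * (-(2 / F t ^ 2).re)) l (𝓝 (-(1 / 2))) := by
  have h0 : Tendsto (fun t : ℝ => ((1 / 2 : ℂ) / (F t ^ 2 / (4 * (t : ℂ)))).re) l
      (𝓝 (((1 / 2 : ℂ) / 1).re)) :=
    (Complex.continuous_re.tendsto _).comp (tendsto_const_nhds.div hc one_ne_zero)
  have h1 : Tendsto (fun t : ℝ => -((1 / 2 : ℂ) / (F t ^ 2 / (4 * (t : ℂ)))).re) l
      (𝓝 (-(1 / 2))) := by
    have := h0.neg
    norm_num at this ⊢
    exact this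
  refine h1.congr' ?_
  filter_upwards [hne] with t ht
  have htC : (t : ℂ) ≠ 0 := Complex.ofReal_ne_zero.mpr ht
  have hF2 : F t ^ 2 ≠ 0 := pow_ne_zero _ (hF t)
  have he : (1 / 2 : ℂ) / (F t ^ 2 / (4 * (t : ℂ))) = (t : ℂ) * (2 / F t ^ 2) := by
    field_simp
    ring
  rw [he, Complex.re_ofReal_mul]
  ring

/-- if `f_t'(z) ≠ 0` satisfies `∂_t f_t'(z) = -2 f_t'(z)/f_t(z)²`, then
`∂_t log|f_t'(z)| = -Re(2/f_t(z)²)`; consequently, if `f_t(z)²/(4t) → 1` as `t → ±∞`,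
then `log|f_t'(z)| / log|t| → -1/2` as `t → ±∞`. -/
theorem stmt_14 (w F : ℝ → ℂ)
    (hw : ∀ t, w t ≠ 0) (hF : ∀ t, F t ≠ 0)
    (hw' : ∀ t, HasDerivAt w (-2 * w t / F t ^ 2) t) :
    (∀ t, HasDerivAt (fun s => Real.log ‖w s‖) (-(2 / F t ^ 2).re) t) ∧
    ((Filter.Tendsto (fun t : ℝ => F t ^ 2 / (4 * (t : ℂ))) Filter.atTop (𝓝 1) →
      Filter.Tendsto (fun t : ℝ => Real.log ‖w t‖ / Real.log |t|) Filter.atTop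
        (𝓝 (-(1 / 2)))) ∧
     (Filter.Tendsto (fun t : ℝ => F t ^ 2 / (4 * (t : ℂ))) Filter.atBot (𝓝 1) →
      Filter.Tendsto (fun t : ℝ => Real.log ‖w t‖ / Real.log |t|) Filter.atBot
        (𝓝 (-(1 / 2))))) := by
  set d : ℝ → ℝ := fun t => -(2 / F t ^ 2).re with hd_def
  have hg : ∀ t, HasDerivAt (fun s => Real.log ‖w s‖) (d t) t := by
    intro t
    have := logNormDeriv w (-2 * w t / F t ^ 2) t (hw t) (hw' t)
    have he : -2 * w t / F t ^ 2 / w t = -(2 / F t ^ 2) := by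
      have hF2 : F t ^ 2 ≠ 0 := pow_ne_zero _ (hF t)
      field_simp [hw t]
    rwa [he, Complex.neg_re] at this
  refine ⟨hg, ?_, ?_⟩
  · intro hc
    have hlim := limAux F hF atTop (eventually_ne_atTop 0) hc
    have hcore := core (fun s => Real.log ‖w s‖) d (-(1 / 2)) hg hlim
    refine hcore.congr' ?_
    filter_upwards [eventually_ge_atTop (1 : ℝ)] with t ht
    rw [abs_of_pos (by linarith)]
  · intro hc
    have hlim := limAux F hF atBot (eventually_ne_atBot 0) hc
    have hlim' : Tendsto (fun t : ℝ => t * (d (-t) * (-1))) atTop (𝓝 (-(1 / 2))) := by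
      have := hlim.comp tendsto_neg_atTop_atBot
      refine this.congr fun t => ?_
      simp only [Function.comp]
      ring
    have hgG : ∀ t, HasDerivAt (fun s => Real.log ‖w (-s)‖) (d (-t) * (-1)) t :=
      fun t => (hg (-t)).comp t (hasDerivAt_neg t)
    have hcore := core (fun s => Real.log ‖w (-s)‖) (fun t => d (-t) * (-1)) (-(1 / 2))
      hgG hlim'
    have H : Tendsto (fun t : ℝ => Real.log ‖w t‖ / Real.log (-t)) atBot (𝓝 (-(1 / 2))) := by
      have := hcore.comp tendsto_neg_atBot_atTop
      refine this.congr fun t => ?_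
      simp [Function.comp]
    refine H.congr' ?_
    filter_upwards [eventually_le_atBot (-1 : ℝ)] with t ht
    rw [abs_of_neg (by linarith)]
end
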